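/- Let S, L, A, M, Y satisfy Y \perp A | (M, L, S) (the semiparametric restriction of model M_{semi,1}), all on a finite discrete probability space with positivity. Define T1(l,m,s) = E[Y | L=l, M=m, S=s]. Then the identified functional \Psi^a = \sum_{m,l} T1(l,m,0) P(M=m | L=l, A=a, S=1) P(L=l | S=0) admits the inverse-probability-weighting representation: \Psi^a = E[ (1-S)/P(S=0) * (p(M | S=1, A=a, L) / p(M | S=0, L)) * Y ]. -/

import Mathlib

/-! Grouping the IPW sum by the value of `(M, L)` turns it into
`∑ m l, E[Y 1{S = 0, M = m, L = l}] / P(S = 0) * p(m | 1, a, l) / p(m | 0, l)`,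
and the chain rule `P(M = m, L = l | S = 0) = p(m | 0, l) P(L = l | S = 0)` identifies each of
these terms with the corresponding term `T1(l, m, 0) P(m | l, a, 1) P(L = l | S = 0)` of the
g-formula. -/

open Finset
open scoped Classical

noncomputable section

/-- Probability of an event under weight function `w`. -/
def Pr {Ω : Type*} [Fintype Ω] (w : Ω → ℝ) (E : Ω → Prop) : ℝ :=
  ∑ ω, if E ω then w ω else 0

/-- Conditional probability `P(E | F)`. -/
def CP {Ω : Type*} [Fintype Ω] (w : Ω → ℝ) (E F : Ω → Prop) : ℝ :=
  Pr w (fun ω => E ω ∧ F ω) / Pr w F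

/-- Conditional expectation `E[X | F]`. -/
def CE {Ω : Type*} [Fintype Ω] (w : Ω → ℝ) (X : Ω → ℝ) (F : Ω → Prop) : ℝ :=
  (∑ ω, if F ω then w ω * X ω else 0) / Pr w F

section

variable {Ω : Type*} [Fintype Ω] (w : Ω → ℝ)

lemma Pr_congr {E F : Ω → Prop} (h : ∀ ω, E ω ↔ F ω) : Pr w E = Pr w F :=
  sum_congr rfl fun ω _ => if_congr (h ω) rfl rfl

lemma CP_congr_right (E : Ω → Prop) {F G : Ω → Prop} (h : ∀ ω, F ω ↔ G ω) :
    CP w E F = CP w E G := by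
  unfold CP
  rw [Pr_congr w h, Pr_congr w fun ω => and_congr_right' (h ω)]

lemma CE_mul_CP_eq_div_CP (X : Ω → ℝ) (E F G : Ω → Prop) :
    CE w X (fun ω => F ω ∧ E ω ∧ G ω) * CP w F G =
      (∑ ω, if F ω ∧ E ω ∧ G ω then w ω * X ω else 0) / Pr w G /
        CP w E (fun ω => G ω ∧ F ω) := by
  unfold CE CP
  rw [Pr_congr w (E := fun ω => E ω ∧ G ω ∧ F ω) (F := fun ω => F ω ∧ E ω ∧ G ω) (by tauto),
    Pr_congr w (E := fun ω => F ω ∧ G ω) (F := fun ω => G ω ∧ F ω) (by tauto),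
    div_div_eq_mul_div]
  -- `ring_nf`, not `ring`: the two sums differ in their (defeq) `Decidable` instances.
  ring_nf

end

lemma sum_mul_eq_sum_strata {Ω 𝕄 𝕃 : Type*} [Fintype Ω] [Fintype 𝕄] [Fintype 𝕃]
    (M : Ω → 𝕄) (L : Ω → 𝕃) (f : Ω → ℝ) (g : 𝕄 → 𝕃 → ℝ) :
    ∑ ω, f ω * g (M ω) (L ω) =
      ∑ m, ∑ l, (∑ ω, if M ω = m ∧ L ω = l then f ω else 0) * g m l := by
  rw [← sum_fiberwise univ (fun ω => (M ω, L ω)), Fintype.sum_prod_type]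
  refine sum_congr rfl fun m _ => sum_congr rfl fun l _ => ?_
  rw [sum_filter, sum_mul]
  refine sum_congr rfl fun ω _ => ?_
  by_cases h : M ω = m ∧ L ω = l
  · simp [h]
  · simp only [Prod.ext_iff, h, if_false, zero_mul]

theorem gformula_ipw_equivalence_general
    {Ω 𝕃 𝕄 𝔸 : Type*} [Fintype Ω] [Fintype 𝕃] [Fintype 𝕄] [Fintype 𝔸]
    (w : Ω → ℝ)
    (S : Ω → ℕ) (L : Ω → 𝕃) (A : Ω → 𝔸) (M : Ω → 𝕄) (Y : Ω → ℝ) (a : 𝔸) :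
    (∑ m : 𝕄, ∑ l : 𝕃,
        CE w Y (fun ω => L ω = l ∧ M ω = m ∧ S ω = 0) *
        CP w (fun ω => M ω = m) (fun ω => L ω = l ∧ A ω = a ∧ S ω = 1) *
        CP w (fun ω => L ω = l) (fun ω => S ω = 0)) =
      ∑ ω, w ω *
        ((if S ω = 0 then (1:ℝ) else 0) / Pr w (fun ω' => S ω' = 0)) *
        (CP w (fun ω' => M ω' = M ω) (fun ω' => S ω' = 1 ∧ A ω' = a ∧ L ω' = L ω) /
         CP w (fun ω' => M ω' = M ω) (fun ω' => S ω' = 0 ∧ L ω' = L ω)) *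
        Y ω := by
  let P₀ := Pr w (fun ω => S ω = 0)
  let ratio (m : 𝕄) (l : 𝕃) : ℝ :=
    CP w (fun ω => M ω = m) (fun ω => S ω = 1 ∧ A ω = a ∧ L ω = l) /
      CP w (fun ω => M ω = m) (fun ω => S ω = 0 ∧ L ω = l)
  have stratum (m : 𝕄) (l : 𝕃) :
      (∑ ω, if M ω = m ∧ L ω = l then (if S ω = 0 then w ω * Y ω else 0) / P₀ else 0) =
        (∑ ω, if L ω = l ∧ M ω = m ∧ S ω = 0 then w ω * Y ω else 0) / P₀ := by
    rw [sum_div]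
    refine sum_congr rfl fun ω _ => ?_
    by_cases hS : S ω = 0 <;> by_cases hM : M ω = m <;> by_cases hL : L ω = l <;> simp [*]
  calc _ = ∑ m, ∑ l, (∑ ω, if L ω = l ∧ M ω = m ∧ S ω = 0 then w ω * Y ω else 0) / P₀ *
          ratio m l := by
        refine sum_congr rfl fun m _ => sum_congr rfl fun l _ => ?_
        rw [mul_right_comm, CE_mul_CP_eq_div_CP, CP_congr_right w _
          (F := fun ω => L ω = l ∧ A ω = a ∧ S ω = 1) (G := fun ω => S ω = 1 ∧ A ω = a ∧ L ω = l)
          (by tauto)]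
        dsimp only [ratio, P₀]
        ring_nf -- `Decidable` instances again
    _ = ∑ ω, (if S ω = 0 then w ω * Y ω else 0) / P₀ * ratio (M ω) (L ω) := by
        simp only [sum_mul_eq_sum_strata M L, stratum]
    _ = _ := by
        refine sum_congr rfl fun ω _ => ?_
        split_ifs <;> ring

/-- equivalence of the g-formula (outcome-regression) and
inverse-probability-weighting representations of the transported
counterfactual mean, under `Y ⟂ A | (M, L, S)`. -/
theorem gformula_ipw_equivalence
    {Ω 𝕃 𝕄 𝔸 : Type*} [Fintype Ω] [Fintype 𝕃] [Fintype 𝕄] [Fintype 𝔸]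
    (w : Ω → ℝ) (hw0 : ∀ ω, 0 ≤ w ω) (hw1 : ∑ ω, w ω = 1)
    (S : Ω → ℕ) (L : Ω → 𝕃) (A : Ω → 𝔸) (M : Ω → 𝕄) (Y : Ω → ℝ) (a : 𝔸)
    (hposS0 : Pr w (fun ω => S ω = 0) > 0)
    (hpos : ∀ m l a' s, s = 0 ∨ s = 1 →
      Pr w (fun ω => S ω = s ∧ M ω = m ∧ L ω = l) > 0 ∧
      Pr w (fun ω => S ω = s ∧ A ω = a' ∧ M ω = m ∧ L ω = l) > 0 ∧
      Pr w (fun ω => S ω = s ∧ A ω = a' ∧ L ω = l) > 0 ∧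
      Pr w (fun ω => L ω = l) > 0)
    -- semiparametric restriction Y ⟂ A | (M, L, S)
    (hindep : ∀ (y : ℝ) (m : 𝕄) (l : 𝕃) (a' : 𝔸) (s : ℕ),
      Pr w (fun ω => M ω = m ∧ L ω = l ∧ A ω = a' ∧ S ω = s) > 0 →
      CP w (fun ω => Y ω = y) (fun ω => M ω = m ∧ L ω = l ∧ A ω = a' ∧ S ω = s) =
      CP w (fun ω => Y ω = y) (fun ω => M ω = m ∧ L ω = l ∧ S ω = s)) :
    (∑ m : 𝕄, ∑ l : 𝕃,
        CE w Y (fun ω => L ω = l ∧ M ω = m ∧ S ω = 0) *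
        CP w (fun ω => M ω = m) (fun ω => L ω = l ∧ A ω = a ∧ S ω = 1) *
        CP w (fun ω => L ω = l) (fun ω => S ω = 0)) =
      ∑ ω, w ω *
        ((if S ω = 0 then (1:ℝ) else 0) / Pr w (fun ω' => S ω' = 0)) *
        (CP w (fun ω' => M ω' = M ω) (fun ω' => S ω' = 1 ∧ A ω' = a ∧ L ω' = L ω) /
         CP w (fun ω' => M ω' = M ω) (fun ω' => S ω' = 0 ∧ L ω' = L ω)) *
        Y ω :=
  gformula_ipw_equivalence_general w S L A M Y a
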